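/- arXiv:1412.2844 — 6 statements merged into one kernel-verified Lean document; each statement's English description precedes it below -/
import Mathlib

section
/- For weighted values with nondecreasing y-values, the L2 squared errors satisfy the inequality err(i, j+1) − err(i, j) ≥ err(i+1, j+1) − err(i+1, j) for all 1 < i ≤ j < n, i.e., adding the point j+1 to the interval [i,j] increases the error at least as much as adding it to [i+1,j]. -/
/-- Weighted mean of `y` with weights `w` on the interval `[i, j]`. -/
noncomputable def wmean (w y : ℕ → ℝ) (i j : ℕ) : ℝ :=
  (∑ k ∈ Finset.Icc i j, w k * y k) / (∑ k ∈ Finset.Icc i j, w k)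

/-- Minimal weighted squared error of the best constant fit on `[i, j]`
(the best constant being the weighted mean). -/
noncomputable def err (w y : ℕ → ℝ) (i j : ℕ) : ℝ :=
  ∑ k ∈ Finset.Icc i j, w k * (y k - wmean w y i j) ^ 2

lemma Wpos (w : ℕ → ℝ) (hw : ∀ k, 0 < w k) {i j : ℕ} (hij : i ≤ j) :
    0 < ∑ k ∈ Finset.Icc i j, w k :=
  Finset.sum_pos (fun k _ => hw k) ⟨i, Finset.mem_Icc.2 ⟨le_refl i, hij⟩⟩

lemma errQ (w y : ℕ → ℝ) (hw : ∀ k, 0 < w k) {i j : ℕ} (hij : i ≤ j) :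
    err w y i j = (∑ k ∈ Finset.Icc i j, w k * (y k) ^ 2)
      - (∑ k ∈ Finset.Icc i j, w k * y k) ^ 2 / (∑ k ∈ Finset.Icc i j, w k) := by
  have hW := Wpos w hw hij
  set W := ∑ k ∈ Finset.Icc i j, w k with hWdef
  set S := ∑ k ∈ Finset.Icc i j, w k * y k with hSdef
  have hmu : wmean w y i j = S / W := rfl
  unfold err
  rw [hmu]
  have : ∀ k ∈ Finset.Icc i j,
      w k * (y k - S / W) ^ 2
        = w k * (y k) ^ 2 - (2 * (S / W)) * (w k * y k) + (S / W) ^ 2 * w k := by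
    intro k _; ring
  rw [Finset.sum_congr rfl this]
  rw [Finset.sum_add_distrib, Finset.sum_sub_distrib, ← Finset.mul_sum, ← Finset.mul_sum,
    ← hSdef, ← hWdef]
  field_simp
  ring

lemma err_add (w y : ℕ → ℝ) (hw : ∀ k, 0 < w k) {i j : ℕ} (hij : i ≤ j) :
    err w y i (j + 1) - err w y i j =
      (∑ k ∈ Finset.Icc i j, w k) * w (j + 1)
        / ((∑ k ∈ Finset.Icc i j, w k) + w (j + 1))
        * (y (j + 1) - wmean w y i j) ^ 2 := by
  have hW := Wpos w hw hij
  have hW' := Wpos w hw (hij.trans (Nat.le_succ j))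
  have hsplit : Finset.Icc i (j + 1) = insert (j + 1) (Finset.Icc i j) := by
    ext k; simp only [Finset.mem_Icc, Finset.mem_insert]; omega
  have hnot : j + 1 ∉ Finset.Icc i j := by
    simp [Finset.mem_Icc]
  rw [errQ w y hw hij, errQ w y hw (hij.trans (Nat.le_succ j))]
  set W := ∑ k ∈ Finset.Icc i j, w k with hWdef
  set S := ∑ k ∈ Finset.Icc i j, w k * y k with hSdef
  have h1 : ∑ k ∈ Finset.Icc i (j + 1), w k = w (j + 1) + W := by
    rw [hsplit, Finset.sum_insert hnot]
  have h2 : ∑ k ∈ Finset.Icc i (j + 1), w k * y k = w (j + 1) * y (j + 1) + S := by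
    rw [hsplit, Finset.sum_insert hnot]
  have h3 : ∑ k ∈ Finset.Icc i (j + 1), w k * (y k) ^ 2
      = w (j + 1) * (y (j + 1)) ^ 2 + ∑ k ∈ Finset.Icc i j, w k * (y k) ^ 2 := by
    rw [hsplit, Finset.sum_insert hnot]
  have hmu : wmean w y i j = S / W := rfl
  rw [h1, h2, h3, hmu]
  have hwj := hw (j + 1)
  have hWw : (0:ℝ) < w (j + 1) + W := by linarith
  field_simp
  ring

lemma wmean_le (w y : ℕ → ℝ) (hy : Monotone y) (hw : ∀ k, 0 < w k)
    {i j m : ℕ} (hij : i ≤ j) (hjm : j ≤ m) :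
    wmean w y i j ≤ y m := by
  have hW := Wpos w hw hij
  rw [wmean, div_le_iff₀ hW]
  calc ∑ k ∈ Finset.Icc i j, w k * y k
      ≤ ∑ k ∈ Finset.Icc i j, w k * y m := by
        apply Finset.sum_le_sum
        intro k hk
        exact mul_le_mul_of_nonneg_left (hy ((Finset.mem_Icc.1 hk).2.trans hjm)) (hw k).le
    _ = y m * ∑ k ∈ Finset.Icc i j, w k := by rw [← Finset.sum_mul]; ring

lemma wmean_mono (w y : ℕ → ℝ) (hy : Monotone y) (hw : ∀ k, 0 < w k)
    {i j : ℕ} (hij : i + 1 ≤ j) :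
    wmean w y i j ≤ wmean w y (i + 1) j := by
  have hW2 := Wpos w hw hij
  have hW1 := Wpos w hw ((Nat.le_succ i).trans hij)
  have hsplit : Finset.Icc i j = insert i (Finset.Icc (i + 1) j) := by
    ext k; simp only [Finset.mem_Icc, Finset.mem_insert]; omega
  have hnot : i ∉ Finset.Icc (i + 1) j := by simp
  set W := ∑ k ∈ Finset.Icc (i + 1) j, w k with hWdef
  set S := ∑ k ∈ Finset.Icc (i + 1) j, w k * y k with hSdef
  have h1 : ∑ k ∈ Finset.Icc i j, w k = w i + W := by
    rw [hsplit, Finset.sum_insert hnot]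
  have h2 : ∑ k ∈ Finset.Icc i j, w k * y k = w i * y i + S := by
    rw [hsplit, Finset.sum_insert hnot]
  have hyS : W * y i ≤ S := by
    calc W * y i = ∑ k ∈ Finset.Icc (i + 1) j, w k * y i := by rw [Finset.sum_mul]
      _ ≤ S := Finset.sum_le_sum (fun k hk =>
          mul_le_mul_of_nonneg_left (hy (Nat.le_of_succ_le (Finset.mem_Icc.1 hk).1)) (hw k).le)
  rw [wmean, wmean, h1, h2, ← hWdef, ← hSdef]
  rw [div_le_div_iff₀ (by rw [h1] at hW1; exact hW1) hW2]
  have := hw i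
  nlinarith

/-- For nondecreasing values, adding the point `j+1` to the interval `[i, j]`
increases the error at least as much as adding it to `[i+1, j]`. -/
theorem err_increment_antitone (w y : ℕ → ℝ) (hy : Monotone y)
    (hw : ∀ k, 0 < w k) (i j : ℕ) (hi : 0 < i) (hij : i ≤ j) :
    err w y (i + 1) (j + 1) - err w y (i + 1) j ≤
      err w y i (j + 1) - err w y i j := by
  rcases eq_or_lt_of_le hij with rfl | hlt
  · -- i = j case: LHS = 0, RHS ≥ 0
    have hL1 : err w y (i + 1) i = 0 := by
      unfold err
      rw [Finset.Icc_eq_empty (by omega)]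
      simp
    have hL2 : err w y (i + 1) (i + 1) = 0 := by
      unfold err wmean
      rw [Finset.Icc_self, Finset.sum_singleton, Finset.sum_singleton, Finset.sum_singleton]
      rw [mul_div_cancel_left₀ _ (hw (i + 1)).ne']
      ring
    rw [hL1, hL2, sub_zero, err_add w y hw (le_refl i)]
    have hW := Wpos w hw (le_refl i)
    have hwj := hw (i + 1)
    exact mul_nonneg (div_nonneg (mul_nonneg hW.le hwj.le) (by linarith)) (sq_nonneg _)
  · have hij' : i + 1 ≤ j := hlt
    rw [err_add w y hw hij, err_add w y hw hij']
    set W1 := ∑ k ∈ Finset.Icc i j, w k with hW1def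
    set W2 := ∑ k ∈ Finset.Icc (i + 1) j, w k with hW2def
    have hW1 := Wpos w hw hij
    have hW2 := Wpos w hw hij'
    have hW21 : W2 ≤ W1 := by
      rw [hW1def, hW2def]
      have hsplit : Finset.Icc i j = insert i (Finset.Icc (i + 1) j) := by
        ext k; simp only [Finset.mem_Icc, Finset.mem_insert]; omega
      rw [hsplit, Finset.sum_insert (by simp)]
      have := hw i; linarith
    have hwj := hw (j + 1)
    have hmu2 : wmean w y (i + 1) j ≤ y (j + 1) :=
      wmean_le w y hy hw hij' (Nat.le_succ j)
    have hmu12 : wmean w y i j ≤ wmean w y (i + 1) j :=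
      wmean_mono w y hy hw hij'
    have hcoef : W2 * w (j + 1) / (W2 + w (j + 1)) ≤ W1 * w (j + 1) / (W1 + w (j + 1)) := by
      rw [div_le_div_iff₀ (by linarith) (by linarith)]
      nlinarith [mul_le_mul_of_nonneg_right hW21 (mul_pos hwj hwj).le]
    have hsq : (y (j + 1) - wmean w y (i + 1) j) ^ 2
        ≤ (y (j + 1) - wmean w y i j) ^ 2 := by
      have h1 : 0 ≤ y (j + 1) - wmean w y (i + 1) j := by linarith
      nlinarith
    have hc2 : 0 ≤ W2 * w (j + 1) / (W2 + w (j + 1)) := by positivity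
    calc W2 * w (j + 1) / (W2 + w (j + 1)) * (y (j + 1) - wmean w y (i + 1) j) ^ 2
        ≤ W1 * w (j + 1) / (W1 + w (j + 1)) * (y (j + 1) - wmean w y i j) ^ 2 :=
          mul_le_mul hcoef hsq (sq_nonneg _) (by positivity)
end

section
/- For weighted values with nondecreasing y-values, the matrix M(i,j) = err(i,j) (extended by M(i,j) = +∞ for j < i) satisfies the Monge inequality M(i₁, j₂) + M(i₂, j₁) ≥ M(i₁, j₁) + M(i₂, j₂) for all i₁ < i₂ and j₁ < j₂. -/
/-!
Write `S` and `μ` for the total weight and the weighted mean of `y` on `[i, j]`. The parallel-axis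
identity `∑ w (y - c)² = err + S (μ - c)²` gives the increment
`err(i, j + 1) - err(i, j) = w_{j+1} · S / (S + w_{j+1}) · (y_{j+1} - μ)²`.
Moving `i` to the left increases `S` and, `y` being nondecreasing, decreases `μ ≤ y_{j+1}`; so the
increments are antitone in `i`, and summing them over `j` gives the quadrangle inequality for `err`.
Below the diagonal the right-hand side is `+∞`.
-/

open Finset

/-- The error matrix, extended by `+∞` below the diagonal. -/
noncomputable def errM (w y : ℕ → ℝ) (i j : ℕ) : EReal :=
  if i ≤ j then ((err w y i j : ℝ) : EReal) else ⊤

section WeightedSums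

variable {ι : Type*} (s : Finset ι) (w y : ι → ℝ)

theorem sum_mul_sub_mean_eq_zero (hS : ∑ k ∈ s, w k ≠ 0) :
    ∑ k ∈ s, w k * (y k - (∑ k ∈ s, w k * y k) / ∑ k ∈ s, w k) = 0 := by
  simp only [mul_sub, sum_sub_distrib, ← sum_mul, mul_div_cancel₀ _ hS, sub_self]

theorem sum_mul_sub_sq_eq_add (hS : ∑ k ∈ s, w k ≠ 0) (c : ℝ) :
    ∑ k ∈ s, w k * (y k - c) ^ 2 =
      ∑ k ∈ s, w k * (y k - (∑ k ∈ s, w k * y k) / ∑ k ∈ s, w k) ^ 2 +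
        (∑ k ∈ s, w k) * ((∑ k ∈ s, w k * y k) / ∑ k ∈ s, w k - c) ^ 2 := by
  set μ := (∑ k ∈ s, w k * y k) / ∑ k ∈ s, w k
  have hsplit : ∀ k ∈ s, w k * (y k - c) ^ 2 =
      w k * (y k - μ) ^ 2 + 2 * (μ - c) * (w k * (y k - μ)) + w k * (μ - c) ^ 2 :=
    fun k _ => by ring
  rw [sum_congr rfl hsplit, sum_add_distrib, sum_add_distrib, ← mul_sum, ← sum_mul,
    sum_mul_sub_mean_eq_zero s w y hS, mul_zero, add_zero]

variable {s w y}

theorem mean_le_iff (hS : 0 < ∑ k ∈ s, w k) (c : ℝ) :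
    (∑ k ∈ s, w k * y k) / ∑ k ∈ s, w k ≤ c ↔ ∑ k ∈ s, w k * (y k - c) ≤ 0 := by
  simp only [div_le_iff₀ hS, mul_sub, sum_sub_distrib, ← sum_mul, sub_nonpos, mul_comm c]

theorem le_mean_iff (hS : 0 < ∑ k ∈ s, w k) (c : ℝ) :
    c ≤ (∑ k ∈ s, w k * y k) / ∑ k ∈ s, w k ↔ 0 ≤ ∑ k ∈ s, w k * (y k - c) := by
  simp only [le_div_iff₀ hS, mul_sub, sum_sub_distrib, ← sum_mul, sub_nonneg, mul_comm c]

end WeightedSums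

section IntervalFit

variable {w y : ℕ → ℝ}

theorem sum_Icc_weight_pos (hw : ∀ k, 0 < w k) {i j : ℕ} (h : i ≤ j) :
    0 < ∑ k ∈ Icc i j, w k :=
  sum_pos (fun k _ => hw k) (nonempty_Icc.2 h)

theorem wmean_le_of_forall_le (hw : ∀ k, 0 < w k) {i j : ℕ} (h : i ≤ j) {c : ℝ}
    (hc : ∀ k ∈ Icc i j, y k ≤ c) : wmean w y i j ≤ c :=
  (mean_le_iff (sum_Icc_weight_pos hw h) c).2 <|
    sum_nonpos fun k hk => mul_nonpos_of_nonneg_of_nonpos (hw k).le (sub_nonpos.2 (hc k hk))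

theorem le_wmean_of_forall_le (hw : ∀ k, 0 < w k) {i j : ℕ} (h : i ≤ j) {c : ℝ}
    (hc : ∀ k ∈ Icc i j, c ≤ y k) : c ≤ wmean w y i j :=
  (le_mean_iff (sum_Icc_weight_pos hw h) c).2 <|
    sum_nonneg fun k hk => mul_nonneg (hw k).le (sub_nonneg.2 (hc k hk))

theorem wmean_le_wmean_of_le_left (hy : Monotone y) (hw : ∀ k, 0 < w k) {i₁ i₂ j : ℕ}
    (h₁ : i₁ ≤ i₂) (h₂ : i₂ ≤ j) : wmean w y i₁ j ≤ wmean w y i₂ j := by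
  set μ := wmean w y i₂ j
  have hμ : y i₂ ≤ μ := le_wmean_of_forall_le hw h₂ fun k hk => hy (mem_Icc.1 hk).1
  have hsplit : ∑ k ∈ Icc i₁ j, w k * (y k - μ) =
      ∑ k ∈ Ico i₁ i₂, w k * (y k - μ) + ∑ k ∈ Icc i₂ j, w k * (y k - μ) := by
    simp only [← Ico_add_one_right_eq_Icc]
    exact (sum_Ico_consecutive _ h₁ (h₂.trans j.le_succ)).symm
  have hright : ∑ k ∈ Icc i₂ j, w k * (y k - μ) = 0 :=
    sum_mul_sub_mean_eq_zero _ _ _ (sum_Icc_weight_pos hw h₂).ne'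
  refine (mean_le_iff (sum_Icc_weight_pos hw (h₁.trans h₂)) μ).2 ?_
  rw [hsplit, hright, add_zero]
  exact sum_nonpos fun k hk => mul_nonpos_of_nonneg_of_nonpos (hw k).le
    (sub_nonpos.2 ((hy (mem_Ico.1 hk).2.le).trans hμ))

theorem err_succ (hw : ∀ k, 0 < w k) {i j : ℕ} (h : i ≤ j) :
    err w y i (j + 1) = err w y i j + w (j + 1) *
      ((∑ k ∈ Icc i j, w k) / (∑ k ∈ Icc i j, w k + w (j + 1))) *
        (y (j + 1) - wmean w y i j) ^ 2 := by
  set S := ∑ k ∈ Icc i j, w k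
  set μ := wmean w y i j
  have hS : 0 < S := sum_Icc_weight_pos hw h
  have hw' := hw (j + 1)
  have hSμ : S * μ = ∑ k ∈ Icc i j, w k * y k := mul_div_cancel₀ _ hS.ne'
  have hμ' : wmean w y i (j + 1) = (S * μ + w (j + 1) * y (j + 1)) / (S + w (j + 1)) := by
    rw [wmean, sum_Icc_succ_top (h.trans j.le_succ), sum_Icc_succ_top (h.trans j.le_succ), hSμ]
  have hshift : ∑ k ∈ Icc i j, w k * (y k - wmean w y i (j + 1)) ^ 2 =
      err w y i j + S * (μ - wmean w y i (j + 1)) ^ 2 :=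
    sum_mul_sub_sq_eq_add _ _ _ hS.ne' _
  rw [err, sum_Icc_succ_top (h.trans j.le_succ), hshift, hμ']
  field_simp
  ring

theorem err_succ_sub_le_of_le_left (hy : Monotone y) (hw : ∀ k, 0 < w k) {i₁ i₂ j : ℕ}
    (h₁ : i₁ ≤ i₂) (h₂ : i₂ ≤ j) :
    err w y i₂ (j + 1) - err w y i₂ j ≤ err w y i₁ (j + 1) - err w y i₁ j := by
  rw [err_succ hw h₂, err_succ hw (h₁.trans h₂), add_sub_cancel_left, add_sub_cancel_left]
  have hS₂ := sum_Icc_weight_pos hw h₂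
  have hw' := hw (j + 1)
  have hS : ∑ k ∈ Icc i₂ j, w k ≤ ∑ k ∈ Icc i₁ j, w k :=
    sum_le_sum_of_subset_of_nonneg (Icc_subset_Icc_left h₁) fun k _ _ => (hw k).le
  have hfrac : (∑ k ∈ Icc i₂ j, w k) / (∑ k ∈ Icc i₂ j, w k + w (j + 1)) ≤
      (∑ k ∈ Icc i₁ j, w k) / (∑ k ∈ Icc i₁ j, w k + w (j + 1)) := by
    rw [div_le_div_iff₀ (by linarith) (by linarith)]
    nlinarith
  have hμ₂ : wmean w y i₂ j ≤ y (j + 1) :=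
    wmean_le_of_forall_le hw h₂ fun k hk => hy ((mem_Icc.1 hk).2.trans j.le_succ)
  have hdev : (y (j + 1) - wmean w y i₂ j) ^ 2 ≤ (y (j + 1) - wmean w y i₁ j) ^ 2 :=
    pow_le_pow_left₀ (sub_nonneg.2 hμ₂)
      (sub_le_sub_left (wmean_le_wmean_of_le_left hy hw h₁ h₂) _) 2
  have hfrac₂ : 0 ≤ (∑ k ∈ Icc i₂ j, w k) / (∑ k ∈ Icc i₂ j, w k + w (j + 1)) := by positivity
  exact mul_le_mul (mul_le_mul_of_nonneg_left hfrac hw'.le) hdev (sq_nonneg _)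
    (mul_nonneg hw'.le (hfrac₂.trans hfrac))

theorem err_quadrangle (hy : Monotone y) (hw : ∀ k, 0 < w k) {i₁ i₂ j₁ j₂ : ℕ}
    (hi : i₁ ≤ i₂) (hij : i₂ ≤ j₁) (hj : j₁ ≤ j₂) :
    err w y i₁ j₁ + err w y i₂ j₂ ≤ err w y i₁ j₂ + err w y i₂ j₁ := by
  induction j₂, hj using Nat.le_induction with
  | base => rw [add_comm]
  | succ j hj ih =>
    have := err_succ_sub_le_of_le_left hy hw hi (hij.trans hj)
    linarith

theorem errM_ne_bot (w y : ℕ → ℝ) (i j : ℕ) : errM w y i j ≠ ⊥ := by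
  unfold errM
  split_ifs <;> simp

end IntervalFit

/-- For nondecreasing values, the (extended) error matrix is a Monge matrix. -/
theorem errM_monge (w y : ℕ → ℝ) (hy : Monotone y) (hw : ∀ k, 0 < w k)
    (i₁ i₂ j₁ j₂ : ℕ) (hi : i₁ < i₂) (hj : j₁ < j₂) :
    errM w y i₁ j₁ + errM w y i₂ j₂ ≤ errM w y i₁ j₂ + errM w y i₂ j₁ := by
  by_cases hij : i₂ ≤ j₁
  · have h₁₁ : i₁ ≤ j₁ := hi.le.trans hij
    simp only [errM, if_pos h₁₁, if_pos (h₁₁.trans hj.le), if_pos (hij.trans hj.le), if_pos hij,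
      ← EReal.coe_add, EReal.coe_le_coe_iff]
    exact err_quadrangle hy hw hi.le hij hj.le
  · have hbelow : errM w y i₂ j₁ = ⊤ := if_neg hij
    rw [hbelow, EReal.add_top_of_ne_bot (errM_ne_bot w y i₁ j₂)]
    exact le_top
end

section
/- If M is a Monge matrix and jopt(i) denotes the smallest column index j at which M(i, ·) attains its minimum, then jopt is monotone nondecreasing in i. -/
/-- If `M` is a Monge matrix and `jopt i` is the smallest column at which row
`i` attains its minimum, then `jopt` is monotone nondecreasing. -/
theorem monge_argmin_monotone {n : ℕ} (M : Fin n → Fin n → ℝ)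
    (hM : ∀ i₁ i₂ j₁ j₂ : Fin n, i₁ < i₂ → j₁ < j₂ →
      M i₁ j₁ + M i₂ j₂ ≤ M i₁ j₂ + M i₂ j₁)
    (jopt : Fin n → Fin n)
    (hjopt : ∀ i : Fin n, IsLeast {j : Fin n | ∀ j' : Fin n, M i j ≤ M i j'} (jopt i)) :
    Monotone jopt := by
  intro i₁ i₂ hle
  rcases eq_or_lt_of_le hle with rfl | hlt
  · exact le_rfl
  · by_contra hc
    push_neg at hc
    have hmonge := hM i₁ i₂ (jopt i₂) (jopt i₁) hlt hc
    have h2 : M i₂ (jopt i₂) ≤ M i₂ (jopt i₁) := (hjopt i₂).1 (jopt i₁)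
    have h1 : M i₁ (jopt i₂) ≤ M i₁ (jopt i₁) := by linarith
    have hin : jopt i₂ ∈ {j : Fin n | ∀ j' : Fin n, M i₁ j ≤ M i₁ j'} := by
      intro j'
      exact h1.trans ((hjopt i₁).1 j')
    exact absurd ((hjopt i₁).2 hin) (not_le.mpr hc)
end

section
/- The dynamic programming recurrence is correct: Err(i,c), the minimal squared error of a c-step approximation of the data on [i,n], satisfies Err(i,c) = min over j with i ≤ j ≤ n−c+1 of ( err(i,j) + Err(j+1, c−1) ), with base case Err(i,1) = err(i,n). -/
/-- Weighted squared error of `f` against the data `(y, w)` on `[s, e]`. -/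
noncomputable def errF (w y f : ℕ → ℝ) (s e : ℕ) : ℝ :=
  ∑ k ∈ Finset.Icc s e, w k * (y k - f k) ^ 2

/-- `f` is a `b`-step function on the interval `[s, e]`. -/
def IsBStep (f : ℕ → ℝ) (b s e : ℕ) : Prop :=
  ∃ j : ℕ → ℕ, j 0 = s - 1 ∧ j b = e ∧ (∀ k < b, j k < j (k + 1)) ∧
    ∀ k < b, ∀ i ∈ Finset.Icc (j k + 1) (j (k + 1)), f i = f (j (k + 1))

/-- The best constant fit is the weighted mean. -/
lemma err_le_const (w y : ℕ → ℝ) (hw : ∀ k, 0 < w k) {i j : ℕ} (hij : i ≤ j) (C : ℝ) :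
    err w y i j ≤ ∑ k ∈ Finset.Icc i j, w k * (y k - C) ^ 2 := by
  have hSpos : 0 < ∑ k ∈ Finset.Icc i j, w k :=
    Finset.sum_pos (fun k _ => hw k) (Finset.nonempty_Icc.mpr hij)
  set S := ∑ k ∈ Finset.Icc i j, w k with hS
  set μ := wmean w y i j with hμ
  have hM : ∑ k ∈ Finset.Icc i j, w k * y k = μ * S := by
    rw [hμ, wmean, ← hS, div_mul_cancel₀ _ hSpos.ne']
  have key : (∑ k ∈ Finset.Icc i j, w k * (y k - C) ^ 2) - err w y i j
      = S * (μ - C) ^ 2 := by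
    rw [err, ← hμ, ← Finset.sum_sub_distrib]
    have hcongr : ∀ k ∈ Finset.Icc i j,
        w k * (y k - C) ^ 2 - w k * (y k - μ) ^ 2
          = (μ - C) * 2 * (w k * y k) - ((μ - C) * (C + μ)) * w k := by
      intro k _; ring
    rw [Finset.sum_congr rfl hcongr, Finset.sum_sub_distrib, ← Finset.mul_sum,
      ← Finset.mul_sum, hM, ← hS]
    ring
  nlinarith [mul_nonneg hSpos.le (sq_nonneg (μ - C))]

lemma errF_split (w y f : ℕ → ℝ) {i j n : ℕ} (h1 : i ≤ j) (h2 : j ≤ n) :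
    errF w y f i n = errF w y f i j + errF w y f (j + 1) n := by
  unfold errF
  rw [← Finset.sum_union]
  · apply Finset.sum_congr _ (fun _ _ => rfl)
    ext a
    simp only [Finset.mem_Icc, Finset.mem_union]
    omega
  · rw [Finset.disjoint_left]
    intro a ha hb
    simp only [Finset.mem_Icc] at ha hb
    omega

/-- Chain growth for strictly increasing breakpoints. -/
lemma jchain {j : ℕ → ℕ} {b : ℕ} (hm : ∀ k < b, j k < j (k + 1)) (a : ℕ) :
    ∀ d, a + d ≤ b → j a + d ≤ j (a + d) := by
  intro d
  induction d with
  | zero => simp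
  | succ m ih =>
    intro h
    have h1 := ih (by omega)
    have h2 := hm (a + m) (by omega)
    have he : a + (m + 1) = (a + m) + 1 := by omega
    rw [he]
    omega

/-- Correctness of the dynamic-programming recurrence: with base case
`Err i 1 = err i n`, the minimal `c`-step error on `[i, n]` is the minimum over
`i ≤ j ≤ n − c + 1` of `err i j + Err (j+1) (c−1)`. -/
theorem dp_recurrence_correct (w y : ℕ → ℝ) (hw : ∀ k, 0 < w k) (n : ℕ)
    (Err : ℕ → ℕ → ℝ)
    (hErr : ∀ i c : ℕ, 1 ≤ i → i ≤ n → 1 ≤ c → c ≤ n - i + 1 →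
      IsLeast {e : ℝ | ∃ f : ℕ → ℝ, IsBStep f c i n ∧ e = errF w y f i n}
        (Err i c)) :
    (∀ i : ℕ, 1 ≤ i → i ≤ n → Err i 1 = err w y i n) ∧
      (∀ i c : ℕ, 1 ≤ i → 2 ≤ c → c ≤ n - i + 1 →
        IsLeast ((fun j : ℕ => err w y i j + Err (j + 1) (c - 1)) ''
            Set.Icc i (n - c + 1))
          (Err i c)) := by
  constructor
  · -- base case
    intro i hi1 hin
    have hL := hErr i 1 hi1 hin le_rfl (by omega)
    have hmem : err w y i n ∈
        {e : ℝ | ∃ f : ℕ → ℝ, IsBStep f 1 i n ∧ e = errF w y f i n} := by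
      refine ⟨fun _ => wmean w y i n,
        ⟨fun k => match k with | 0 => i - 1 | _ + 1 => n, rfl, rfl, ?_, ?_⟩, rfl⟩
      · intro k hk
        interval_cases k
        show i - 1 < n
        omega
      · intro k _ m _
        rfl
    refine le_antisymm (hL.2 hmem) ?_
    obtain ⟨f, ⟨J, hJ0, hJ1, _, hJv⟩, hfe⟩ := hL.1
    have hJ01 : J (0 + 1) = J 1 := rfl
    have hconst : ∀ m ∈ Finset.Icc i n, f m = f n := by
      intro m hm
      rw [Finset.mem_Icc] at hm
      have h := hJv 0 one_pos m (Finset.mem_Icc.mpr (by omega))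
      rw [h, hJ01, hJ1]
    calc err w y i n ≤ ∑ k ∈ Finset.Icc i n, w k * (y k - f n) ^ 2 :=
          err_le_const w y hw hin _
      _ = errF w y f i n := by
          unfold errF
          exact Finset.sum_congr rfl fun k hk => by rw [hconst k hk]
      _ = Err i 1 := hfe.symm
  · intro i c hi1 hc2 hcn
    obtain ⟨c', rfl⟩ : ∃ c', c = c' + 1 := ⟨c - 1, by omega⟩
    simp only [Nat.add_sub_cancel]
    have hc'1 : 1 ≤ c' := by omega
    have hin : i ≤ n := by omega
    have hL := hErr i (c' + 1) hi1 hin (by omega) hcn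
    -- upper bound: Err i (c'+1) ≤ err i j + Err (j+1) c' for each admissible j
    have hub : ∀ j, i ≤ j → j ≤ n - (c' + 1) + 1 →
        Err i (c' + 1) ≤ err w y i j + Err (j + 1) c' := by
      intro j hij hjn
      have hj1n : j + 1 ≤ n := by omega
      have hL' := hErr (j + 1) c' (by omega) hj1n (by omega) (by omega)
      obtain ⟨g, ⟨J, hJ0, hJb, hJlt, hJv⟩, hge⟩ := hL'.1
      have hJ0' : J 0 = j := by omega
      set f : ℕ → ℝ := fun k => if k ≤ j then wmean w y i j else g k with hf
      have hJmono : ∀ a, a ≤ c' → j ≤ J a := by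
        intro a ha
        have := jchain hJlt 0 a (by omega)
        simp only [Nat.zero_add] at this
        omega
      have hfg : ∀ m, j < m → f m = g m := by
        intro m hm
        simp [hf, Nat.not_le.mpr hm]
      have hstep : IsBStep f (c' + 1) i n := by
        refine ⟨fun k => match k with | 0 => i - 1 | m + 1 => J m, rfl, hJb, ?_, ?_⟩
        · intro k hk
          cases k with
          | zero =>
            show i - 1 < J 0
            omega
          | succ m =>
            exact hJlt m (by omega)
        · intro k hk m hm
          cases k with
          | zero =>
            have hm' : i - 1 + 1 ≤ m ∧ m ≤ J 0 := Finset.mem_Icc.mp hm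
            have hm1 : m ≤ j := by omega
            show f m = f (J 0)
            simp [hf, hm1, hJ0']
          | succ a =>
            have hm' : J a + 1 ≤ m ∧ m ≤ J (a + 1) := Finset.mem_Icc.mp hm
            have ha1 : j ≤ J a := hJmono a (by omega)
            have ha2 : J a < J (a + 1) := hJlt a (by omega)
            show f m = f (J (a + 1))
            rw [hfg m (by omega), hfg (J (a + 1)) (by omega)]
            exact hJv a (by omega) m (Finset.mem_Icc.mpr hm')
      have hval : errF w y f i n = err w y i j + Err (j + 1) c' := by
        rw [errF_split w y f hij (by omega)]
        congr 1
        · unfold errF err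
          exact Finset.sum_congr rfl fun k hk => by
            rw [Finset.mem_Icc] at hk
            simp [hf, hk.2]
        · rw [hge]
          unfold errF
          exact Finset.sum_congr rfl fun k hk => by
            rw [Finset.mem_Icc] at hk
            rw [hfg k (by omega)]
      have := hL.2 ⟨f, hstep, rfl⟩
      rwa [hval] at this
    constructor
    · -- Err i (c'+1) is attained at some j
      obtain ⟨f, ⟨J, hJ0, hJb, hJlt, hJv⟩, hfe⟩ := hL.1
      set j := J 1 with hj
      have h01 : J 0 < J 1 := hJlt 0 (by omega)
      have hij : i ≤ j := by omega
      have hchain : J 1 + c' ≤ J (1 + c') := jchain hJlt 1 c' (by omega)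
      have h1c : J (1 + c') = n := by rw [show 1 + c' = c' + 1 from by omega, hJb]
      have hjn : j ≤ n - (c' + 1) + 1 := by omega
      have hj1n : j + 1 ≤ n := by omega
      have hL' := hErr (j + 1) c' (by omega) hj1n (by omega) (by omega)
      -- f is constant on [i, j]
      have hJ01 : J (0 + 1) = J 1 := rfl
      have hconst : ∀ m ∈ Finset.Icc i j, f m = f j := by
        intro m hm
        rw [Finset.mem_Icc] at hm
        have h := hJv 0 (by omega) m (Finset.mem_Icc.mpr (by omega))
        rw [h, hJ01]
      have h1 : err w y i j ≤ errF w y f i j := by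
        calc err w y i j ≤ ∑ k ∈ Finset.Icc i j, w k * (y k - f j) ^ 2 :=
              err_le_const w y hw hij _
          _ = errF w y f i j := by
              unfold errF
              exact Finset.sum_congr rfl fun k hk => by rw [hconst k hk]
      have hstep' : IsBStep f c' (j + 1) n := by
        refine ⟨fun k => J (k + 1), by show J 1 = j + 1 - 1; omega, ?_, ?_, ?_⟩
        · show J (c' + 1) = n
          exact hJb
        · intro k hk
          exact hJlt (k + 1) (by omega)
        · intro k hk m hm
          exact hJv (k + 1) (by omega) m hm
      have h2 : Err (j + 1) c' ≤ errF w y f (j + 1) n :=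
        hL'.2 ⟨f, hstep', rfl⟩
      have hsplit : errF w y f i n = errF w y f i j + errF w y f (j + 1) n :=
        errF_split w y f hij (by omega)
      have hge : err w y i j + Err (j + 1) c' ≤ Err i (c' + 1) := by
        rw [hfe, hsplit]
        linarith
      exact ⟨j, ⟨hij, hjn⟩, le_antisymm hge (hub j hij hjn)⟩
    · rintro e ⟨j, ⟨hij, hjn⟩, rfl⟩
      exact hub j hij hjn
end

section
/- For weighted values with nondecreasing y-values, any optimal b-step L2 approximation (where its values on each step equal the weighted mean of that step) is automatically isotonic, i.e., its step values are nondecreasing; hence the optimal b-step approximation error equals the optimal b-step reduced isotonic regression error. -/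
/-- `f` is a `b`-step function on `[s, e]` whose value on each step is the
weighted mean of the data on that step. -/
def IsBStepMeans (w y : ℕ → ℝ) (f : ℕ → ℝ) (b s e : ℕ) : Prop :=
  ∃ j : ℕ → ℕ, j 0 = s - 1 ∧ j b = e ∧ (∀ k < b, j k < j (k + 1)) ∧
    ∀ k < b, ∀ i ∈ Finset.Icc (j k + 1) (j (k + 1)),
      f i = wmean w y (j k + 1) (j (k + 1))

lemma jmono {j : ℕ → ℕ} {b : ℕ} (hj : ∀ k < b, j k < j (k + 1)) :
    ∀ {a c : ℕ}, a ≤ c → c ≤ b → j a ≤ j c := by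
  intro a c hac
  induction c, hac using Nat.le_induction with
  | base => exact fun _ => le_refl _
  | succ m hm ih => exact fun hmb => (ih (by omega)).trans (hj m (by omega)).le

lemma wmean_bounds {w y : ℕ → ℝ} (hy : Monotone y) (hw : ∀ k, 0 < w k)
    {a c : ℕ} (hac : a ≤ c) :
    y a ≤ wmean w y a c ∧ wmean w y a c ≤ y c := by
  have hne : (Finset.Icc a c).Nonempty := ⟨a, by simp [hac]⟩
  have hS : 0 < ∑ k ∈ Finset.Icc a c, w k := Finset.sum_pos (fun k _ => hw k) hne
  constructor
  · rw [wmean, le_div_iff₀ hS]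
    calc y a * ∑ k ∈ Finset.Icc a c, w k = ∑ k ∈ Finset.Icc a c, w k * y a := by
          rw [Finset.mul_sum]; exact Finset.sum_congr rfl fun k _ => mul_comm _ _
      _ ≤ ∑ k ∈ Finset.Icc a c, w k * y k := Finset.sum_le_sum fun k hk =>
          mul_le_mul_of_nonneg_left (hy (Finset.mem_Icc.mp hk).1) (hw k).le
  · rw [wmean, div_le_iff₀ hS]
    calc ∑ k ∈ Finset.Icc a c, w k * y k
        ≤ ∑ k ∈ Finset.Icc a c, w k * y c := Finset.sum_le_sum fun k hk =>
          mul_le_mul_of_nonneg_left (hy (Finset.mem_Icc.mp hk).2) (hw k).le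
      _ = y c * ∑ k ∈ Finset.Icc a c, w k := by
          rw [Finset.mul_sum]; exact Finset.sum_congr rfl fun k _ => mul_comm _ _

lemma wmean_min {w y : ℕ → ℝ} (hw : ∀ k, 0 < w k) {a e : ℕ} (hae : a ≤ e) (c : ℝ) :
    ∑ k ∈ Finset.Icc a e, w k * (y k - wmean w y a e) ^ 2
      ≤ ∑ k ∈ Finset.Icc a e, w k * (y k - c) ^ 2 := by
  have hS : 0 < ∑ k ∈ Finset.Icc a e, w k :=
    Finset.sum_pos (fun k _ => hw k) ⟨a, by simp [hae]⟩
  have hμ : wmean w y a e * (∑ k ∈ Finset.Icc a e, w k)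
      = ∑ k ∈ Finset.Icc a e, w k * y k := div_mul_cancel₀ _ hS.ne'
  have expand : ∀ d : ℝ, ∑ k ∈ Finset.Icc a e, w k * (y k - d) ^ 2
      = (∑ k ∈ Finset.Icc a e, w k * y k ^ 2)
        - 2 * d * (∑ k ∈ Finset.Icc a e, w k * y k)
        + d ^ 2 * (∑ k ∈ Finset.Icc a e, w k) := by
    intro d
    rw [Finset.mul_sum, Finset.mul_sum, ← Finset.sum_sub_distrib, ← Finset.sum_add_distrib]
    exact Finset.sum_congr rfl fun k _ => by ring
  rw [expand, expand, ← hμ]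
  nlinarith [mul_nonneg hS.le (sq_nonneg (c - wmean w y a e))]

lemma find_block {j : ℕ → ℕ} {b : ℕ} (hj : ∀ k < b, j k < j (k + 1))
    {i : ℕ} (h0 : j 0 < i) (hb : i ≤ j b) :
    ∃ k < b, j k < i ∧ i ≤ j (k + 1) := by
  set K := Nat.findGreatest (fun k => j k < i) b with hK
  have hPK : j K < i := Nat.findGreatest_spec (P := fun k => j k < i) (Nat.zero_le b) h0
  have hKb : K ≤ b := Nat.findGreatest_le b
  have hKlt : K < b := by
    rcases eq_or_lt_of_le hKb with h | h
    · rw [h] at hPK; omega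
    · exact h
  refine ⟨K, hKlt, hPK, ?_⟩
  by_contra h
  push_neg at h
  exact Nat.findGreatest_is_greatest (Nat.lt_succ_self K) (by omega) h

lemma find_eq {j : ℕ → ℕ} {b : ℕ} (hj : ∀ k < b, j k < j (k + 1)) {k i : ℕ}
    (hk : k < b) (h1 : j k < i) (h2 : i ≤ j (k + 1)) :
    Nat.findGreatest (fun m => j m < i) b = k := by
  apply le_antisymm
  · by_contra h
    push_neg at h
    have hle : Nat.findGreatest (fun m => j m < i) b ≤ b := Nat.findGreatest_le b
    have hP : j (Nat.findGreatest (fun m => j m < i) b) < i :=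
      Nat.findGreatest_spec (P := fun m => j m < i) (show k ≤ b by omega) h1
    have : j (k + 1) ≤ j (Nat.findGreatest (fun m => j m < i) b) := jmono hj (by omega) hle
    omega
  · exact Nat.le_findGreatest (by omega) h1

lemma means_monotone {w y f : ℕ → ℝ} (hy : Monotone y) (hw : ∀ k, 0 < w k)
    {b n : ℕ} (hf : IsBStepMeans w y f b 1 n) : MonotoneOn f (Set.Icc 1 n) := by
  obtain ⟨j, hj0, hjb, hj, hmean⟩ := hf
  have hj00 : j 0 = 0 := by omega
  intro x hx x' hx' hxx'
  obtain ⟨hx1, hx2⟩ := hx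
  obtain ⟨hx'1, hx'2⟩ := hx'
  obtain ⟨k, hkb, hk1, hk2⟩ := find_block hj (show j 0 < x by omega) (show x ≤ j b by omega)
  obtain ⟨k', hk'b, hk'1, hk'2⟩ :=
    find_block hj (show j 0 < x' by omega) (show x' ≤ j b by omega)
  have hkk' : k ≤ k' := by
    by_contra h
    push_neg at h
    have : j (k' + 1) ≤ j k := jmono hj (by omega) (by omega)
    omega
  rw [hmean k hkb x (Finset.mem_Icc.mpr ⟨by omega, hk2⟩),
      hmean k' hk'b x' (Finset.mem_Icc.mpr ⟨by omega, hk'2⟩)]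
  rcases eq_or_lt_of_le hkk' with rfl | hlt
  · exact le_refl _
  · calc wmean w y (j k + 1) (j (k + 1))
        ≤ y (j (k + 1)) := (wmean_bounds hy hw (by have := hj k hkb; omega)).2
      _ ≤ y (j k' + 1) := hy (by have := jmono hj (show k + 1 ≤ k' by omega) (by omega); omega)
      _ ≤ wmean w y (j k' + 1) (j (k' + 1)) :=
          (wmean_bounds hy hw (by have := hj k' hk'b; omega)).1

lemma sum_split (F : ℕ → ℝ) (j : ℕ → ℕ) :
    ∀ b : ℕ, (∀ k < b, j k < j (k + 1)) →
    ∑ i ∈ Finset.Ioc (j 0) (j b), F i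
      = ∑ k ∈ Finset.range b, ∑ i ∈ Finset.Ioc (j k) (j (k + 1)), F i := by
  intro b
  induction b with
  | zero => simp
  | succ m ih =>
    intro hj
    rw [Finset.sum_range_succ, ← ih (fun k hk => hj k (by omega)),
      Finset.sum_Ioc_consecutive F
        (jmono (b := m) (fun k hk => hj k (by omega)) (Nat.zero_le m) le_rfl)
        (hj m (by omega)).le]

/-- For nondecreasing data, any optimal `b`-step approximation whose values on
each step are the weighted means is automatically isotonic; hence the optimal
`b`-step error equals the optimal `b`-step reduced isotonic regression error. -/
theorem optimal_bstep_is_isotonic (w y : ℕ → ℝ) (hy : Monotone y)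
    (hw : ∀ k, 0 < w k) (n b : ℕ) (hn : 1 ≤ n) (hb : 1 ≤ b) (hbn : b ≤ n) :
    (∀ f : ℕ → ℝ, IsBStepMeans w y f b 1 n →
      (∀ g : ℕ → ℝ, IsBStep g b 1 n → errF w y f 1 n ≤ errF w y g 1 n) →
      MonotoneOn f (Set.Icc 1 n)) ∧
    (∀ e e' : ℝ,
      IsLeast {e | ∃ f : ℕ → ℝ, IsBStep f b 1 n ∧ e = errF w y f 1 n} e →
      IsLeast {e | ∃ f : ℕ → ℝ, IsBStep f b 1 n ∧ MonotoneOn f (Set.Icc 1 n) ∧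
        e = errF w y f 1 n} e' →
      e = e') := by
  constructor
  · intro f hf _
    exact means_monotone hy hw hf
  · intro e e' he he'
    obtain ⟨⟨f', hf', hmono', he'eq⟩, hlb'⟩ := he'
    obtain ⟨⟨f, hf, heeq⟩, hlb⟩ := he
    have h1 : e ≤ e' := hlb ⟨f', hf', he'eq⟩
    obtain ⟨j, hj0, hjb, hj, hconst⟩ := hf
    have hj00 : j 0 = 0 := by omega
    set g : ℕ → ℝ := fun i => wmean w y (j (Nat.findGreatest (fun m => j m < i) b) + 1)
        (j (Nat.findGreatest (fun m => j m < i) b + 1)) with hg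
    have hgval : ∀ k < b, ∀ i ∈ Finset.Icc (j k + 1) (j (k + 1)),
        g i = wmean w y (j k + 1) (j (k + 1)) := by
      intro k hk i hi
      rw [Finset.mem_Icc] at hi
      rw [hg]
      simp only
      rw [find_eq hj hk (by omega) hi.2]
    have hgmeans : IsBStepMeans w y g b 1 n := ⟨j, hj0, hjb, hj, hgval⟩
    have hgstep : IsBStep g b 1 n := by
      refine ⟨j, hj0, hjb, hj, fun k hk i hi => ?_⟩
      rw [hgval k hk i hi,
        hgval k hk (j (k + 1)) (Finset.mem_Icc.mpr ⟨by have := hj k hk; omega, le_rfl⟩)]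
    have hgmono := means_monotone hy hw hgmeans
    have herr : errF w y g 1 n ≤ errF w y f 1 n := by
      unfold errF
      have hIcc : Finset.Icc 1 n = Finset.Ioc (j 0) (j b) := by
        rw [hj00, hjb]
        exact (Finset.Icc_add_one_left_eq_Ioc 0 n)
      rw [hIcc, sum_split _ j b hj, sum_split _ j b hj]
      apply Finset.sum_le_sum
      intro k hk
      rw [Finset.mem_range] at hk
      have hIoc : Finset.Ioc (j k) (j (k + 1)) = Finset.Icc (j k + 1) (j (k + 1)) :=
        (Finset.Icc_add_one_left_eq_Ioc _ _).symm
      rw [hIoc]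
      have hL : ∑ i ∈ Finset.Icc (j k + 1) (j (k + 1)), w i * (y i - g i) ^ 2
          = ∑ i ∈ Finset.Icc (j k + 1) (j (k + 1)),
              w i * (y i - wmean w y (j k + 1) (j (k + 1))) ^ 2 :=
        Finset.sum_congr rfl (fun i hi => by rw [hgval k hk i hi])
      have hR : ∑ i ∈ Finset.Icc (j k + 1) (j (k + 1)), w i * (y i - f i) ^ 2
          = ∑ i ∈ Finset.Icc (j k + 1) (j (k + 1)),
              w i * (y i - f (j (k + 1))) ^ 2 :=
        Finset.sum_congr rfl (fun i hi => by rw [hconst k hk i hi])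
      rw [hL, hR]
      exact wmean_min hw (by have := hj k hk; omega) _
    have h2 : e' ≤ e := by
      have := hlb' ⟨g, hgstep, hgmono, rfl⟩
      rw [heeq]
      exact this.trans herr
    linarith
end

section
/- Merging adjacent violating pieces preserves L2 isotonic optimality structure: if two adjacent blocks [i,j] and [j+1,k] have weighted means μ₁ ≥ μ₂ respectively, then in any L2 isotonic regression restricted to being constant on each of these two blocks, the optimal isotonic choice assigns both blocks the common value equal to the weighted mean of [i,k], with squared error err(i,k). -/
open Finset

section WeightedLeastSquares

variable {ι : Type*} (s : Finset ι) (w y : ι → ℝ)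

theorem sum_mul_sub_sq_eq (c C : ℝ) :
    ∑ i ∈ s, w i * (y i - C) ^ 2 =
      ∑ i ∈ s, w i * (y i - c) ^ 2 - 2 * (C - c) * ∑ i ∈ s, w i * (y i - c) +
        (C - c) ^ 2 * ∑ i ∈ s, w i := by
  rw [mul_sum, mul_sum, ← sum_sub_distrib, ← sum_add_distrib]
  exact sum_congr rfl fun _ _ => by ring

variable {s}

theorem sum_mul_sub_eq_mul_centerMass_sub (hs : ∑ i ∈ s, w i ≠ 0) (c : ℝ) :
    ∑ i ∈ s, w i * (y i - c) = (∑ i ∈ s, w i) * (s.centerMass w y - c) := by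
  simp only [centerMass, smul_eq_mul, mul_sub, sum_sub_distrib, ← sum_mul]
  rw [mul_inv_cancel_left₀ hs]

theorem sum_mul_sub_centerMass (hs : ∑ i ∈ s, w i ≠ 0) :
    ∑ i ∈ s, w i * (y i - s.centerMass w y) = 0 := by
  rw [sum_mul_sub_eq_mul_centerMass_sub w y hs, sub_self, mul_zero]

variable {t : Finset ι} [DecidableEq ι]

theorem sum_mul_sub_centerMass_union (hst : Disjoint s t)
    (hw : ∑ i ∈ s, w i + ∑ i ∈ t, w i ≠ 0) :
    ∑ i ∈ s, w i * (y i - (s ∪ t).centerMass w y) +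
      ∑ i ∈ t, w i * (y i - (s ∪ t).centerMass w y) = 0 := by
  rw [← sum_union hst] at hw ⊢
  exact sum_mul_sub_centerMass w y hw

variable (hst : Disjoint s t) (hs : 0 < ∑ i ∈ s, w i) (ht : 0 < ∑ i ∈ t, w i)
  (hmean : t.centerMass w y ≤ s.centerMass w y)
include hst hs ht hmean

theorem sum_mul_sub_centerMass_union_nonneg :
    0 ≤ ∑ i ∈ s, w i * (y i - (s ∪ t).centerMass w y) := by
  have hzero := sum_mul_sub_centerMass_union w y hst (add_pos hs ht).ne'
  set μ := (s ∪ t).centerMass w y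
  rw [sum_mul_sub_eq_mul_centerMass_sub w y hs.ne', sum_mul_sub_eq_mul_centerMass_sub w y ht.ne']
    at hzero
  rw [sum_mul_sub_eq_mul_centerMass_sub w y hs.ne']
  by_contra! hneg
  have hs_lt : s.centerMass w y - μ < 0 := neg_of_mul_neg_right hneg hs.le
  have ht_gt : 0 < t.centerMass w y - μ := pos_of_mul_pos_right (by linarith) ht.le
  linarith

theorem sum_mul_sub_centerMass_union_sq_le {C₁ C₂ : ℝ} (hC : C₁ ≤ C₂) :
    ∑ i ∈ s ∪ t, w i * (y i - (s ∪ t).centerMass w y) ^ 2 ≤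
      ∑ i ∈ s, w i * (y i - C₁) ^ 2 + ∑ i ∈ t, w i * (y i - C₂) ^ 2 := by
  have hD := sum_mul_sub_centerMass_union_nonneg w y hst hs ht hmean
  have hzero := sum_mul_sub_centerMass_union w y hst (add_pos hs ht).ne'
  set μ := (s ∪ t).centerMass w y
  rw [sum_union hst, sum_mul_sub_sq_eq s w y μ C₁, sum_mul_sub_sq_eq t w y μ C₂,
    eq_neg_of_add_eq_zero_right hzero]
  linarith [mul_nonneg hD (sub_nonneg.2 hC), mul_nonneg hs.le (sq_nonneg (C₁ - μ)),
    mul_nonneg ht.le (sq_nonneg (C₂ - μ))]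

end WeightedLeastSquares

theorem Nat.Icc_union_Icc_add_one {i j k : ℕ} (hij : i ≤ j + 1) (hjk : j ≤ k) :
    Icc i j ∪ Icc (j + 1) k = Icc i k := by
  ext l
  simp only [mem_union, mem_Icc]
  omega

theorem Nat.disjoint_Icc_Icc_add_one (i j k : ℕ) : Disjoint (Icc i j) (Icc (j + 1) k) := by
  simp only [disjoint_left, mem_Icc]
  omega

theorem wmean_eq_centerMass (w y : ℕ → ℝ) (i j : ℕ) :
    wmean w y i j = (Icc i j).centerMass w y := by
  simp only [wmean, centerMass, smul_eq_mul, div_eq_inv_mul]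

/-- Pooling adjacent violators: if the mean of `[i, j]` is at least the mean of
`[j+1, k]`, then among isotonic assignments of constants to the two blocks, the
optimum assigns both blocks the weighted mean of `[i, k]`, with total squared
error `err(i, k)`. -/
theorem pav_merge_optimal (w y : ℕ → ℝ) (hw : ∀ l, 0 < w l)
    (i j k : ℕ) (hij : i ≤ j) (hjk : j < k)
    (hviol : wmean w y (j + 1) k ≤ wmean w y i j) :
    IsLeast
      {e : ℝ | ∃ C₁ C₂ : ℝ, C₁ ≤ C₂ ∧
        e = ∑ l ∈ Finset.Icc i j, w l * (y l - C₁) ^ 2 +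
            ∑ l ∈ Finset.Icc (j + 1) k, w l * (y l - C₂) ^ 2}
      (∑ l ∈ Finset.Icc i k, w l * (y l - wmean w y i k) ^ 2) := by
  have hunion := Nat.Icc_union_Icc_add_one (by omega : i ≤ j + 1) hjk.le
  have hdisj := Nat.disjoint_Icc_Icc_add_one i j k
  have hpos : ∀ a b, a ≤ b → 0 < ∑ l ∈ Icc a b, w l := fun a b hab =>
    sum_pos (fun l _ => hw l) (nonempty_Icc.2 hab)
  rw [wmean_eq_centerMass, ← hunion]
  refine ⟨⟨_, _, le_rfl, sum_union hdisj⟩, ?_⟩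
  rintro e ⟨C₁, C₂, hC, rfl⟩
  rw [wmean_eq_centerMass, wmean_eq_centerMass] at hviol
  exact sum_mul_sub_centerMass_union_sq_le w y hdisj (hpos i j hij) (hpos _ _ hjk) hviol hC
end
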